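/- Let H' be a 6-partite intersecting hypergraph with 8 edges and τ(H') = 4, and let K be the hypergraph on the degree-3 vertices of H' with edges {A ∩ V(K) : A ∈ H'} (multiplicities allowed). Then every edge of K has size at most |V(K)| − 2. -/

import Mathlib

def Intersecting {V : Type*} (E : Finset (Finset V)) : Prop :=
  ∀ e ∈ E, ∀ f ∈ E, ∃ v, v ∈ e ∧ v ∈ f

def IsCover {V : Type*} (E : Finset (Finset V)) (C : Finset V) : Prop :=
  ∀ e ∈ E, ∃ v ∈ C, v ∈ e

noncomputable def coverNum {V : Type*} (E : Finset (Finset V)) : ℕ :=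
  sInf {n | ∃ C : Finset V, IsCover E C ∧ C.card = n}

def Partite {V : Type*} (r : ℕ) (part : V → Fin r) (E : Finset (Finset V)) : Prop :=
  ∀ e ∈ E, ∀ i : Fin r, (e.filter (fun v => part v = i)).card = 1

open Classical in
noncomputable def deg {V : Type*} (E : Finset (Finset V)) (v : V) : ℕ :=
  (E.filter (fun e => v ∈ e)).card

/-!
A vertex of degree at least 4 leaves at most four pairwise intersecting edges, and two vertices
cover those, so `τ = 4` forces maximum degree 3.

Now delete an edge `A`. The remaining seven edges have size 6, degrees in `{1, 2, 3}` and total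
degree 42; since they pairwise intersect, `∑ d² = ∑_{e,f} |e ∩ f| ≥ 7 · 12`. For such degrees
`∑ d² + n₁ = 2 ∑ d + 3 n₃`, so `n₁ ≤ 3 n₃`. Each of the six parts has odd total degree 7, hence
contains a vertex of odd degree, so `n₁ + n₃ ≥ 6` and `n₃ ≥ 2`. A vertex of degree 3 after the
deletion cannot lie on `A` (its degree would have been 4), so it is a degree-3 vertex of the
original hypergraph outside `A`.
-/

open Finset

lemma sum_sq_add_card_filter_eq_one {ι : Type*} (s : Finset ι) (f : ι → ℕ)
    (hf : ∀ i ∈ s, 1 ≤ f i ∧ f i ≤ 3) :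
    ∑ i ∈ s, f i ^ 2 + #{i ∈ s | f i = 1} = 2 * ∑ i ∈ s, f i + 3 * #{i ∈ s | f i = 3} := by
  simp only [card_filter, mul_sum, ← sum_add_distrib]
  refine sum_congr rfl fun i hi => ?_
  obtain ⟨h1, h3⟩ := hf i hi
  interval_cases f i <;> rfl

section

variable {V : Type*}

lemma Intersecting.mono {E F : Finset (Finset V)} (hE : Intersecting E) (h : F ⊆ E) :
    Intersecting F :=
  fun e he f hf => hE e (h he) f (h hf)

lemma Partite.mono {r : ℕ} {part : V → Fin r} {E F : Finset (Finset V)} (hE : Partite r part E)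
    (h : F ⊆ E) : Partite r part F :=
  fun e he => hE e (h he)

lemma Partite.card_eq {r : ℕ} {part : V → Fin r} {E : Finset (Finset V)} (hE : Partite r part E)
    {e : Finset V} (he : e ∈ E) : #e = r := by
  rw [card_eq_sum_card_fiberwise (f := part) (t := univ) fun _ _ => mem_univ _]
  simp [hE e he]

lemma coverNum_le_card {E : Finset (Finset V)} {C : Finset V} (hC : IsCover E C) :
    coverNum E ≤ #C :=
  Nat.sInf_le ⟨C, hC, rfl⟩

variable [DecidableEq V]

lemma deg_eq_card_filter (E : Finset (Finset V)) (v : V) : deg E v = #{e ∈ E | v ∈ e} := by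
  rw [deg]; congr

lemma deg_mono {E F : Finset (Finset V)} (h : F ⊆ E) (v : V) : deg F v ≤ deg E v := by
  simp only [deg_eq_card_filter]
  exact card_le_card (filter_subset_filter _ h)

lemma deg_erase_add_one {E : Finset (Finset V)} {A : Finset V} (hA : A ∈ E) {v : V} (hv : v ∈ A) :
    deg (E.erase A) v + 1 = deg E v := by
  rw [deg_eq_card_filter, deg_eq_card_filter, filter_erase, card_erase_add_one (by simp [hA, hv])]

lemma deg_erase_of_notMem (E : Finset (Finset V)) {A : Finset V} {v : V} (hv : v ∉ A) :
    deg (E.erase A) v = deg E v := by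
  rw [deg_eq_card_filter, deg_eq_card_filter, filter_erase, erase_eq_of_notMem (by simp [hv])]

lemma deg_pos_of_mem_biUnion {E : Finset (Finset V)} {v : V} (h : v ∈ E.biUnion id) :
    0 < deg E v := by
  obtain ⟨e, he, hv⟩ := mem_biUnion.1 h
  rw [deg_eq_card_filter, card_pos]
  exact ⟨e, mem_filter.2 ⟨he, hv⟩⟩

lemma sum_deg_eq_sum_card_inter (E : Finset (Finset V)) (s : Finset V) :
    ∑ v ∈ s, deg E v = ∑ e ∈ E, #(s ∩ e) := by
  simp only [deg_eq_card_filter, ← filter_mem_eq_inter]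
  exact sum_card_bipartiteAbove_eq_sum_card_bipartiteBelow (· ∈ ·)

lemma sum_deg_eq_sum_card (E : Finset (Finset V)) :
    ∑ v ∈ E.biUnion id, deg E v = ∑ e ∈ E, #e := by
  rw [sum_deg_eq_sum_card_inter]
  exact sum_congr rfl fun e he => by
    rw [inter_eq_right.2 (show e ⊆ E.biUnion id from subset_biUnion_of_mem id he)]

lemma sum_deg_sq_eq (E : Finset (Finset V)) :
    ∑ v ∈ E.biUnion id, deg E v ^ 2 = ∑ e ∈ E, ∑ f ∈ E, #(e ∩ f) := by
  have hsq : ∀ v, deg E v ^ 2 = ∑ _e ∈ E.bipartiteAbove (· ∈ ·) v, deg E v := fun v => by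
    rw [sum_const, smul_eq_mul, sq, bipartiteAbove, deg_eq_card_filter]
  simp_rw [hsq, sum_sum_bipartiteAbove_eq_sum_sum_bipartiteBelow, ← sum_deg_eq_sum_card_inter]
  refine sum_congr rfl fun e he => sum_congr ?_ fun _ _ => rfl
  ext v
  simp only [bipartiteBelow, mem_filter, and_iff_right_iff_imp]
  exact fun hv => mem_biUnion.2 ⟨e, he, hv⟩

lemma Intersecting.card_mul_le_sum_deg_sq {E : Finset (Finset V)} (hE : Intersecting E) {r : ℕ}
    (hr : ∀ e ∈ E, #e = r) : #E * (#E - 1 + r) ≤ ∑ v ∈ E.biUnion id, deg E v ^ 2 := by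
  rw [sum_deg_sq_eq, ← smul_eq_mul]
  refine card_nsmul_le_sum _ _ _ fun e he => ?_
  have hmeet : #(E.erase e) • 1 ≤ ∑ f ∈ E.erase e, #(e ∩ f) :=
    card_nsmul_le_sum _ _ _ fun f hf => by
      obtain ⟨v, hve, hvf⟩ := hE e he f (mem_of_mem_erase hf)
      exact card_pos.2 ⟨v, mem_inter.2 ⟨hve, hvf⟩⟩
  rw [← add_sum_erase _ _ he, inter_self, hr e he]
  rw [card_erase_of_mem he, smul_eq_mul, mul_one] at hmeet
  omega

lemma Intersecting.exists_cover_card_le {F : Finset (Finset V)} (hF : Intersecting F) {k : ℕ}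
    (hk : #F ≤ 2 * k) : ∃ C, IsCover F C ∧ #C ≤ k := by
  induction k generalizing F with
  | zero =>
    refine ⟨∅, fun e he => ?_, le_rfl⟩
    simp_all
  | succ k ih =>
    obtain rfl | ⟨e₁, he₁⟩ := F.eq_empty_or_nonempty
    · exact ⟨∅, fun e he => absurd he (notMem_empty e), Nat.zero_le _⟩
    -- one vertex covers `e₁` and another edge `e₂` (`e₂ = e₁` if `F = {e₁}`)
    obtain ⟨e₂, he₂, hrest⟩ : ∃ e₂ ∈ F, #((F.erase e₁).erase e₂) ≤ 2 * k := by
      obtain h | ⟨e₂, he₂⟩ := (F.erase e₁).eq_empty_or_nonempty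
      · exact ⟨e₁, he₁, by simp [h]⟩
      · refine ⟨e₂, mem_of_mem_erase he₂, ?_⟩
        rw [card_erase_of_mem he₂, card_erase_of_mem he₁]
        omega
    obtain ⟨a, ha₁, ha₂⟩ := hF e₁ he₁ e₂ he₂
    obtain ⟨C, hC, hCk⟩ := ih (hF.mono ((erase_subset _ _).trans (erase_subset _ _))) hrest
    refine ⟨insert a C, fun e he => ?_, (card_insert_le _ _).trans (by omega)⟩
    by_cases h₁ : e = e₁
    · exact ⟨a, mem_insert_self _ _, h₁ ▸ ha₁⟩
    by_cases h₂ : e = e₂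
    · exact ⟨a, mem_insert_self _ _, h₂ ▸ ha₂⟩
    obtain ⟨u, hu, hue⟩ := hC e (mem_erase.2 ⟨h₂, mem_erase.2 ⟨h₁, he⟩⟩)
    exact ⟨u, mem_insert_of_mem hu, hue⟩

lemma Intersecting.coverNum_le {E : Finset (Finset V)} (hE : Intersecting E) (v : V) {k : ℕ}
    (hk : #E ≤ deg E v + 2 * k) : coverNum E ≤ k + 1 := by
  have hsplit := card_filter_add_card_filter_not (s := E) (fun e => v ∈ e)
  rw [← deg_eq_card_filter] at hsplit
  obtain ⟨C, hC, hCk⟩ := (hE.mono (filter_subset (fun e => v ∉ e) E)).exists_cover_card_le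
    (k := k) (by omega)
  refine (coverNum_le_card (C := insert v C) fun e he => ?_).trans
    ((card_insert_le _ _).trans (by omega))
  by_cases hv : v ∈ e
  · exact ⟨v, mem_insert_self _ _, hv⟩
  obtain ⟨u, hu, hue⟩ := hC e (mem_filter.2 ⟨he, hv⟩)
  exact ⟨u, mem_insert_of_mem hu, hue⟩

lemma Partite.sum_deg_filter_part {r : ℕ} {part : V → Fin r} {E : Finset (Finset V)}
    (hE : Partite r part E) (i : Fin r) :
    ∑ v ∈ E.biUnion id with part v = i, deg E v = #E := by
  rw [sum_deg_eq_sum_card_inter, card_eq_sum_ones]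
  refine sum_congr rfl fun e he => ?_
  rw [← hE e he i]
  congr 1
  ext v
  simp only [mem_inter, mem_filter]
  exact ⟨fun h => ⟨h.2, h.1.2⟩, fun h => ⟨⟨mem_biUnion.2 ⟨e, he, h.1⟩, h.2⟩, h.1⟩⟩

lemma Partite.le_card_odd_deg {r : ℕ} {part : V → Fin r} {E : Finset (Finset V)}
    (hE : Partite r part E) (hodd : Odd #E) :
    r ≤ #{v ∈ E.biUnion id | Odd (deg E v)} := by
  rw [← Fintype.card_fin r, ← card_univ]
  refine card_le_card_of_surjOn part fun i _ => ?_
  by_contra! h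
  have heven : Even (∑ v ∈ E.biUnion id with part v = i, deg E v) := by
    refine even_sum _ fun v hv => Nat.not_odd_iff_even.1 fun hv' => h ⟨v, ?_, (mem_filter.1 hv).2⟩
    exact mem_filter.2 ⟨(mem_filter.1 hv).1, hv'⟩
  rw [hE.sum_deg_filter_part i] at heven
  exact Nat.not_even_iff_odd.2 hodd heven

lemma two_le_card_deg_eq_three {part : V → Fin 6} {E : Finset (Finset V)}
    (hp : Partite 6 part E) (hi : Intersecting E) (h7 : #E = 7) (hΔ : ∀ v, deg E v ≤ 3) :
    2 ≤ #{v ∈ E.biUnion id | deg E v = 3} := by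
  have hsum : ∑ v ∈ E.biUnion id, deg E v = 42 := by
    rw [sum_deg_eq_sum_card, sum_congr rfl fun e he => hp.card_eq he, sum_const, h7, smul_eq_mul]
  have hsq := hi.card_mul_le_sum_deg_sq fun e he => hp.card_eq he
  have hid := sum_sq_add_card_filter_eq_one _ (deg E) fun v hv => ⟨deg_pos_of_mem_biUnion hv, hΔ v⟩
  have hodd := hp.le_card_odd_deg (h7 ▸ by decide)
  have hsplit : #{v ∈ E.biUnion id | Odd (deg E v)}
      ≤ #{v ∈ E.biUnion id | deg E v = 1} + #{v ∈ E.biUnion id | deg E v = 3} := by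
    refine (card_le_card fun v hv => ?_).trans (card_union_le _ _)
    obtain ⟨hvW, hv⟩ := mem_filter.1 hv
    have := hΔ v
    rw [Nat.odd_iff] at hv
    rcases (by omega : deg E v = 1 ∨ deg E v = 3) with h | h
    exacts [mem_union_left _ (mem_filter.2 ⟨hvW, h⟩), mem_union_right _ (mem_filter.2 ⟨hvW, h⟩)]
  rw [h7] at hsq
  omega

lemma card_deg_eq_add_card_deg_erase_le {E : Finset (Finset V)} {A : Finset V} (hA : A ∈ E)
    {d : ℕ} (hΔ : ∀ v, deg E v ≤ d) :
    #{v ∈ A | deg E v = d} + #{v ∈ (E.erase A).biUnion id | deg (E.erase A) v = d}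
      ≤ #{v ∈ E.biUnion id | deg E v = d} := by
  have hout : ∀ v, deg (E.erase A) v = d → v ∉ A ∧ deg E v = d := fun v hv => by
    have hvA : v ∉ A := fun hvA => by
      have := deg_erase_add_one hA hvA
      have := hΔ v
      omega
    exact ⟨hvA, by rw [← deg_erase_of_notMem E hvA, hv]⟩
  have hdisj : Disjoint {v ∈ A | deg E v = d}
      {v ∈ (E.erase A).biUnion id | deg (E.erase A) v = d} :=
    disjoint_right.2 fun v hv hvA => (hout v (mem_filter.1 hv).2).1 (mem_filter.1 hvA).1
  rw [← card_union_of_disjoint hdisj]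
  refine card_le_card (union_subset (filter_subset_filter _ ?_) fun v hv => ?_)
  · exact subset_biUnion_of_mem id hA
  · obtain ⟨hvW, hvd⟩ := mem_filter.1 hv
    exact mem_filter.2 ⟨biUnion_subset_biUnion_of_subset_left id (erase_subset A E) hvW,
      (hout v hvd).2⟩

end

theorem stmt17 {V : Type*} [DecidableEq V] (part : V → Fin 6)
    (E : Finset (Finset V)) (hp : Partite 6 part E) (hi : Intersecting E)
    (h8 : E.card = 8) (hτ : coverNum E = 4) :
    ∀ A ∈ E, (A.filter (fun v => deg E v = 3)).card + 2 ≤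
      ((E.biUnion id).filter (fun v => deg E v = 3)).card := by
  intro A hA
  have hΔ : ∀ v, deg E v ≤ 3 := fun v => by
    by_contra! h
    have := hi.coverNum_le v (k := 2) (by omega)
    omega
  have h7 : #(E.erase A) = 7 := by rw [card_erase_of_mem hA, h8]
  have hK := two_le_card_deg_eq_three (hp.mono (erase_subset A E)) (hi.mono (erase_subset A E)) h7
    fun v => (deg_mono (erase_subset A E) v).trans (hΔ v)
  exact (Nat.add_le_add_left hK _).trans (card_deg_eq_add_card_deg_erase_le hA hΔ)
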